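/- arXiv:2211.15728 — 2 statements merged into one kernel-verified Lean document; each statement's English description precedes it below -/
import Mathlib

section
/- If τc i > 0 for all i and s is a critical point of the direct-ROI loss L (i.e., for every i the function t ↦ L(Function.update s i t) has derivative 0 at s i), then for all indices i, j one has s i < s j if and only if τr i / τc i < τr j / τc j; that is, the scores s rank the ROIs. -/
/-- The sigmoid function. -/
noncomputable def sigm (t : ℝ) : ℝ := 1 / (1 + Real.exp (-t))

/-!
At a critical point each coordinate of the loss is stationary on its own. Since
`log (σ t / (1 - σ t)) = t` and `(log (1 - σ t))' = -σ t`, the `i`-th partial derivative is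
`-(τr i - τc i * σ (s i)) / N`, so `σ (s i) = τr i / τc i`; as `σ` is strictly increasing, the
scores are ordered exactly as the ROIs.
-/

open Real

lemma sigm_eq_sigmoid : sigm = sigmoid := by
  funext t
  rw [sigm, sigmoid_def, one_div]

lemma log_sigmoid_div_one_sub_sigmoid (x : ℝ) : log (sigmoid x / (1 - sigmoid x)) = x := by
  rw [← sigmoid_neg, ← sigmoid_mul_rexp_neg, div_mul_cancel_left₀ (sigmoid_pos x).ne',
    exp_neg, inv_inv, log_exp]

lemma hasDerivAt_log_one_sub_sigmoid (x : ℝ) :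
    HasDerivAt (fun t => log (1 - sigmoid t)) (-sigmoid x) x := by
  have hpos : 0 < 1 - sigmoid x := sub_pos.2 (sigmoid_lt_one x)
  convert ((hasDerivAt_sigmoid x).const_sub 1).log hpos.ne' using 1
  field_simp

lemma hasDerivAt_directRoi_term (a b x : ℝ) :
    HasDerivAt (fun t => a * log (sigmoid t / (1 - sigmoid t)) + b * log (1 - sigmoid t))
      (a - b * sigmoid x) x := by
  simp only [log_sigmoid_div_one_sub_sigmoid]
  exact ((hasDerivAt_id' x).const_mul a |>.fun_add <|
    (hasDerivAt_log_one_sub_sigmoid x).const_mul b).congr_deriv (by ring)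

theorem HasDerivAt.sum_update {𝕜 F ι : Type*} [NontriviallyNormedField 𝕜]
    [NormedAddCommGroup F] [NormedSpace 𝕜 F] [Fintype ι] [DecidableEq ι]
    {f : ι → 𝕜 → F} {s : ι → 𝕜} {i : ι} {d : F} (h : HasDerivAt (f i) d (s i)) :
    HasDerivAt (fun t => ∑ j, f j (Function.update s i t j)) d (s i) := by
  have hsplit : (fun t => ∑ j, f j (Function.update s i t j)) =
      fun t => f i t + ∑ j ∈ Finset.univ.erase i, f j (s j) := by
    funext t
    rw [← Finset.add_sum_erase _ _ (Finset.mem_univ i), Function.update_self]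
    congr 1
    exact Finset.sum_congr rfl fun j hj => by
      rw [Function.update_of_ne (Finset.ne_of_mem_erase hj)]
  rw [hsplit]
  exact h.add_const _

theorem direct_roi_ranks_general
    (N : ℕ) (s τr τc : Fin N → ℝ)
    (L : (Fin N → ℝ) → ℝ)
    (hL : L = fun u : Fin N → ℝ => -(1 / (N : ℝ)) *
      ∑ i, (τr i * Real.log (sigm (u i) / (1 - sigm (u i)))
        + τc i * Real.log (1 - sigm (u i))))
    (hτc : ∀ i, 0 < τc i)
    (hcrit : ∀ i : Fin N, HasDerivAt (fun t : ℝ => L (Function.update s i t)) 0 (s i)) :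
    ∀ i j : Fin N, s i < s j ↔ τr i / τc i < τr j / τc j := by
  subst hL
  rw [sigm_eq_sigmoid] at hcrit
  have hroi : ∀ i, sigmoid (s i) = τr i / τc i := by
    intro i
    have hN : (N : ℝ) ≠ 0 := Nat.cast_ne_zero.2 (Fin.pos i).ne'
    have hpartial := ((HasDerivAt.sum_update (f := fun j t =>
        τr j * log (sigmoid t / (1 - sigmoid t)) + τc j * log (1 - sigmoid t))
      (hasDerivAt_directRoi_term (τr i) (τc i) (s i))).const_mul (-(1 / (N : ℝ)))).unique
      (hcrit i)
    rw [eq_div_iff (hτc i).ne']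
    field_simp at hpartial
    linarith
  intro i j
  rw [← hroi i, ← hroi j, sigmoid_lt_iff]

/-- at a critical point of the direct-ROI loss, the scores `s`
rank the ROIs `τr i / τc i`. -/
theorem direct_roi_ranks
    (N : ℕ) (hN : 0 < N) (s τr τc : Fin N → ℝ)
    (L : (Fin N → ℝ) → ℝ)
    (hL : L = fun u : Fin N → ℝ => -(1 / (N : ℝ)) *
      ∑ i, (τr i * Real.log (sigm (u i) / (1 - sigm (u i)))
        + τc i * Real.log (1 - sigm (u i))))
    (hτc : ∀ i, 0 < τc i)
    (hcrit : ∀ i : Fin N, HasDerivAt (fun t : ℝ => L (Function.update s i t)) 0 (s i)) :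
    ∀ i j : Fin N, s i < s j ↔ τr i / τc i < τr j / τc j :=
  direct_roi_ranks_general N s τr τc L hL hτc hcrit
end

section
/- For every index j, the partial derivative of the Direct Rank loss L with respect to s_j equals (exp(q j)·(1 − (q j)²) / (∑_i τr i · exp(q i))²) · (τc j · ∑_i τr i · exp(q i) − τr j · ∑_i τc i · exp(q i)); formally, the function t ↦ L(Function.update s j t) has this value as its derivative at s j. -/
open Finset Function Real

theorem Real.hasDerivAt_tanh (x : ℝ) : HasDerivAt tanh (1 - tanh x ^ 2) x := by
  have h := (hasDerivAt_sinh x).div (hasDerivAt_cosh x) (cosh_pos x).ne'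
  have htanh : sinh / cosh = tanh := funext fun y => (tanh_eq_sinh_div_cosh y).symm
  rw [htanh] at h
  refine h.congr_deriv ?_
  rw [tanh_eq_sinh_div_cosh, div_pow, one_sub_div (pow_ne_zero 2 (cosh_pos x).ne')]
  ring

theorem hasDerivAt_sum_update {𝕜 E ι : Type*} [NontriviallyNormedField 𝕜]
    [NormedAddCommGroup E] [NormedSpace 𝕜 E] [Fintype ι] [DecidableEq ι] (f : ι → 𝕜 → E)
    (s : ι → 𝕜) (j : ι) {f' : E} (hf : HasDerivAt (f j) f' (s j)) :
    HasDerivAt (fun t => ∑ i, f i (update s j t i)) f' (s j) := by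
  have hsplit : (fun t => ∑ i, f i (update s j t i)) =
      fun t => f j t + ∑ i ∈ univ.erase j, f i (s i) := by
    funext t
    rw [← add_sum_erase _ _ (mem_univ j), update_self]
    congr 1
    exact sum_congr rfl fun i hi => by rw [update_of_ne (ne_of_mem_erase hi)]
  rw [hsplit]
  exact hf.add_const _

theorem hasDerivAt_sum_mul_exp_tanh_update {ι : Type*} [Fintype ι] [DecidableEq ι]
    (τ s : ι → ℝ) (j : ι) :
    HasDerivAt (fun t => ∑ i, τ i * exp (tanh (update s j t i)))
      (τ j * (exp (tanh (s j)) * (1 - tanh (s j) ^ 2))) (s j) :=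
  hasDerivAt_sum_update (fun i x => τ i * exp (tanh x)) s j
    ((hasDerivAt_tanh (s j)).exp.const_mul (τ j))

theorem direct_rank_partial_deriv_general
    (N : ℕ) (s τr τc : Fin N → ℝ)
    (hr : ∀ i, 0 < τr i)
    (L : (Fin N → ℝ) → ℝ)
    (hL : L = fun u : Fin N → ℝ =>
      (∑ i, τc i * Real.exp (Real.tanh (u i))) /
        (∑ i, τr i * Real.exp (Real.tanh (u i))))
    (j : Fin N) :
    HasDerivAt (fun t : ℝ => L (Function.update s j t))
      ((Real.exp (Real.tanh (s j)) * (1 - (Real.tanh (s j)) ^ 2)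
          / (∑ i, τr i * Real.exp (Real.tanh (s i))) ^ 2)
        * (τc j * ∑ i, τr i * Real.exp (Real.tanh (s i))
            - τr j * ∑ i, τc i * Real.exp (Real.tanh (s i))))
      (s j) := by
  subst hL
  have hden : 0 < ∑ i, τr i * exp (tanh (s i)) :=
    sum_pos (fun i _ => mul_pos (hr i) (exp_pos _)) ⟨j, mem_univ j⟩
  have hquot := (hasDerivAt_sum_mul_exp_tanh_update τc s j).fun_div
    (hasDerivAt_sum_mul_exp_tanh_update τr s j) (by simpa only [update_eq_self] using hden.ne')
  simp only [update_eq_self] at hquot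
  refine hquot.congr_deriv ?_
  ring

/-- partial derivative of the Direct Rank loss. -/
theorem direct_rank_partial_deriv
    (N : ℕ) (hN : 0 < N) (s τr τc : Fin N → ℝ)
    (hr : ∀ i, 0 < τr i) (hc : ∀ i, 0 < τc i)
    (L : (Fin N → ℝ) → ℝ)
    (hL : L = fun u : Fin N → ℝ =>
      (∑ i, τc i * Real.exp (Real.tanh (u i))) /
        (∑ i, τr i * Real.exp (Real.tanh (u i))))
    (j : Fin N) :
    HasDerivAt (fun t : ℝ => L (Function.update s j t))
      ((Real.exp (Real.tanh (s j)) * (1 - (Real.tanh (s j)) ^ 2)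
          / (∑ i, τr i * Real.exp (Real.tanh (s i))) ^ 2)
        * (τc j * ∑ i, τr i * Real.exp (Real.tanh (s i))
            - τr j * ∑ i, τc i * Real.exp (Real.tanh (s i))))
      (s j) :=
  direct_rank_partial_deriv_general N s τr τc hr L hL j
end
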